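/- For α > 0 and μ ∈ ℝ, the function v_μ(z) = log( 8(1+α)² e^μ / (1 + e^μ|z|^{2(1+α)})² ) satisfies the singular Liouville equation Δv_μ + |z|^{2α} e^{v_μ} = 0 at every point of ℝ²∖{0}. -/

import Mathlib

/-!
`v_μ` is radial: `v_μ(z) = g(|z|²)` with `g(s) = log(8(1+α)²e^μ) - 2 log h(s)`,
`h(s) = 1 + e^μ s^(1+α)`. In the plane the Laplacian of `z ↦ g(|z|²)` is
`4 (g'(s) + s g''(s)) = 4 (s g'(s))'` at `s = |z|²`, so the equation reduces to the ODE
`4 (s g')' + s^α e^g = 0` on `s > 0`. Here `s g'(s) = -2(1+α) (1 - 1/h(s))`, whose derivative is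
`-2(1+α) h'/h² = -2(1+α)² e^μ s^α / h²`, while `e^g = 8(1+α)² e^μ / h²`.
-/

open scoped Real

noncomputable section

abbrev E2 : Type := EuclideanSpace ℝ (Fin 2)

/-- The Laplacian on `ℝ²`, computed via second directional derivatives in the
coordinate directions. -/
def lap (u : E2 → ℝ) (x : E2) : ℝ :=
  fderiv ℝ (fun y => fderiv ℝ u y (EuclideanSpace.single 0 1)) x (EuclideanSpace.single 0 1) +
  fderiv ℝ (fun y => fderiv ℝ u y (EuclideanSpace.single 1 1)) x (EuclideanSpace.single 1 1)

/-- The standard family of entire solutions of the singular Liouville equation. -/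
def vmu (α μ : ℝ) (z : E2) : ℝ :=
  Real.log (8 * (1 + α) ^ 2 * Real.exp μ / (1 + Real.exp μ * ‖z‖ ^ (2 * (1 + α))) ^ 2)

open Filter Topology
open scoped RealInnerProductSpace

section Radial

variable {F : Type*} [NormedAddCommGroup F] [InnerProductSpace ℝ F] {g g' : ℝ → ℝ} {x : F}

theorem HasDerivAt.hasFDerivAt_comp_norm_sq {d : ℝ} (hg : HasDerivAt g d (‖x‖ ^ 2)) :
    HasFDerivAt (fun z => g (‖z‖ ^ 2)) (d • 2 • innerSL ℝ x) x :=
  hg.comp_hasFDerivAt x (hasStrictFDerivAt_norm_sq x).hasFDerivAt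

theorem fderiv_comp_norm_sq_apply {d : ℝ} (hg : HasDerivAt g d (‖x‖ ^ 2)) (e : F) :
    fderiv ℝ (fun z => g (‖z‖ ^ 2)) x e = d * (2 * ⟪x, e⟫) := by
  simp [hg.hasFDerivAt_comp_norm_sq.fderiv]

theorem fderiv_fderiv_comp_norm_sq_apply {g'' : ℝ}
    (hg : ∀ᶠ t in 𝓝 (‖x‖ ^ 2), HasDerivAt g (g' t) t) (hg' : HasDerivAt g' g'' (‖x‖ ^ 2))
    (e : F) :
    fderiv ℝ (fun y => fderiv ℝ (fun z => g (‖z‖ ^ 2)) y e) x e =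
      2 * g' (‖x‖ ^ 2) * ‖e‖ ^ 2 + 4 * g'' * ⟪x, e⟫ ^ 2 := by
  have hnear : ∀ᶠ y in 𝓝 x, HasDerivAt g (g' (‖y‖ ^ 2)) (‖y‖ ^ 2) :=
    ((continuous_norm.pow 2).tendsto x).eventually hg
  have hfirst : (fun y => fderiv ℝ (fun z => g (‖z‖ ^ 2)) y e) =ᶠ[𝓝 x]
      fun y => g' (‖y‖ ^ 2) * (2 * ⟪y, e⟫) :=
    hnear.mono fun y hy => fderiv_comp_norm_sq_apply hy e
  have hinner : HasFDerivAt (fun y : F => 2 * ⟪y, e⟫) _ x :=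
    ((hasFDerivAt_id x).inner ℝ (hasFDerivAt_const e x)).const_mul 2
  have hsecond : HasFDerivAt (fun y => g' (‖y‖ ^ 2) * (2 * ⟪y, e⟫)) _ x :=
    hg'.hasFDerivAt_comp_norm_sq.mul hinner
  rw [hfirst.fderiv_eq, hsecond.fderiv]
  simp only [id_eq, add_apply, smul_apply, ContinuousLinearMap.comp_apply,
    ContinuousLinearMap.prod_apply, ContinuousLinearMap.id_apply, zero_apply, fderivInnerCLM_apply,
    inner_zero_right, inner_self_eq_norm_sq_to_K, Real.ringHom_apply, zero_add, smul_eq_mul,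
    coe_innerSL_apply, nsmul_eq_mul, Nat.cast_ofNat]
  ring

theorem lap_comp_norm_sq {g g' : ℝ → ℝ} {g'' : ℝ} {x : E2}
    (hg : ∀ᶠ t in 𝓝 (‖x‖ ^ 2), HasDerivAt g (g' t) t) (hg' : HasDerivAt g' g'' (‖x‖ ^ 2)) :
    lap (fun z => g (‖z‖ ^ 2)) x = 4 * (g' (‖x‖ ^ 2) + ‖x‖ ^ 2 * g'') := by
  simp only [lap, fderiv_fderiv_comp_norm_sq_apply hg hg', EuclideanSpace.inner_single_right]
  rw [EuclideanSpace.real_norm_sq_eq x]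
  simp only [Fin.sum_univ_two, PiLp.norm_single, norm_one, one_pow, mul_one, Real.ringHom_apply,
    one_mul]
  ring

section Profile

variable (α μ : ℝ) {s : ℝ}

def vmuProfile (s : ℝ) : ℝ :=
  Real.log (8 * (1 + α) ^ 2 * Real.exp μ) - 2 * Real.log (1 + Real.exp μ * s ^ (1 + α))

def vmuProfileDeriv (s : ℝ) : ℝ :=
  -2 * ((1 + α) * Real.exp μ * s ^ α) / (1 + Real.exp μ * s ^ (1 + α))

def vmuProfileDeriv2 (s : ℝ) : ℝ :=
  -2 * (1 + α) * Real.exp μ * s ^ (α - 1) *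
    (α - Real.exp μ * s ^ (1 + α)) / (1 + Real.exp μ * s ^ (1 + α)) ^ 2

variable {α μ}

theorem one_add_exp_mul_rpow_pos (hs : 0 ≤ s) : 0 < 1 + Real.exp μ * s ^ (1 + α) := by
  positivity

theorem vmu_eq_vmuProfile (hα : 1 + α ≠ 0) (z : E2) : vmu α μ z = vmuProfile α μ (‖z‖ ^ 2) := by
  have hpow : ‖z‖ ^ (2 * (1 + α)) = (‖z‖ ^ 2) ^ (1 + α) := by
    rw [Real.rpow_mul (norm_nonneg z), Real.rpow_two]
  rw [vmu, vmuProfile, hpow, Real.log_div (by positivity)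
    (pow_ne_zero 2 (one_add_exp_mul_rpow_pos (by positivity)).ne'), Real.log_pow]
  push_cast
  ring

theorem hasDerivAt_vmuProfile (hs : 0 < s) :
    HasDerivAt (vmuProfile α μ) (vmuProfileDeriv α μ s) s := by
  have hh := ((Real.hasDerivAt_rpow_const (p := 1 + α) (Or.inl hs.ne')).const_mul
    (Real.exp μ)).const_add 1
  refine (((hh.log (one_add_exp_mul_rpow_pos hs.le).ne').const_mul 2).const_sub
    (Real.log (8 * (1 + α) ^ 2 * Real.exp μ))).congr_deriv ?_
  rw [vmuProfileDeriv, add_sub_cancel_left]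
  ring

theorem hasDerivAt_vmuProfileDeriv (hs : 0 < s) :
    HasDerivAt (vmuProfileDeriv α μ) (vmuProfileDeriv2 α μ s) s := by
  have hn := ((Real.hasDerivAt_rpow_const (p := α) (Or.inl hs.ne')).const_mul
    ((1 + α) * Real.exp μ)).const_mul (-2)
  have hh := ((Real.hasDerivAt_rpow_const (p := 1 + α) (Or.inl hs.ne')).const_mul
    (Real.exp μ)).const_add 1
  refine (hn.div hh (one_add_exp_mul_rpow_pos hs.le).ne').congr_deriv ?_
  rw [vmuProfileDeriv2, add_sub_cancel_left, Real.rpow_sub_one hs.ne', add_comm 1 α,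
    Real.rpow_add_one hs.ne']
  field_simp
  ring

theorem vmuProfile_solves_radial_liouville (hα : 1 + α ≠ 0) (hs : 0 < s) :
    4 * (vmuProfileDeriv α μ s + s * vmuProfileDeriv2 α μ s) +
      s ^ α * Real.exp (vmuProfile α μ s) = 0 := by
  have hh := one_add_exp_mul_rpow_pos (α := α) (μ := μ) hs.le
  have hexp : Real.exp (vmuProfile α μ s) =
      8 * (1 + α) ^ 2 * Real.exp μ / (1 + Real.exp μ * s ^ (1 + α)) ^ 2 := by
    rw [vmuProfile, Real.exp_sub, Real.exp_log (by positivity), ← Real.log_rpow hh,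
      Real.exp_log (by positivity)]
    norm_num
  rw [hexp, vmuProfileDeriv, vmuProfileDeriv2, Real.rpow_sub_one hs.ne', add_comm 1 α,
    Real.rpow_add_one hs.ne']
  field_simp
  ring

end Profile

/-- for `α > 0` and `μ ∈ ℝ`, the function
`v_μ(z) = log(8(1+α)²e^μ/(1+e^μ|z|^{2(1+α)})²)` satisfies the singular Liouville
equation `Δv_μ + |z|^{2α} e^{v_μ} = 0` at every point of `ℝ²∖{0}`. -/
theorem vmu_solves_singular_liouville (α μ : ℝ) (hα : 0 < α) :
    ∀ z : E2, z ≠ 0 →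
      lap (vmu α μ) z + ‖z‖ ^ (2 * α) * Real.exp (vmu α μ z) = 0 := by
  intro z hz
  have hα' : 1 + α ≠ 0 := by linarith
  have hs : 0 < ‖z‖ ^ 2 := pow_pos (norm_pos_iff.mpr hz) 2
  have hderiv : ∀ᶠ t in 𝓝 (‖z‖ ^ 2), HasDerivAt (vmuProfile α μ) (vmuProfileDeriv α μ t) t :=
    (eventually_gt_nhds hs).mono fun t ht => hasDerivAt_vmuProfile ht
  rw [funext (vmu_eq_vmuProfile (μ := μ) hα'),
    lap_comp_norm_sq hderiv (hasDerivAt_vmuProfileDeriv hs), Real.rpow_mul (norm_nonneg z),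
    Real.rpow_two]
  exact vmuProfile_solves_radial_liouville hα' hs
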